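/- Let F be the ternary operation on {0,1} × {0,1} given by F((a,b),(c,d),(e,h)) = (maj(a,c,e), b ∧ d ∧ h), where maj is the majority operation on {0,1}. Then no ternary term operation p of the algebra ({0,1} × {0,1}, F) — i.e., no member of the smallest set of functions ({0,1}×{0,1})³ → {0,1}×{0,1} containing the three ternary projections and closed under pointwise composition with F — satisfies both p(x,x,y) = x for all x,y and p(x,y,x) = p(y,x,x) for all x,y. Consequently this algebra does not realize system (S3). -/

import Mathlib

/-- The majority operation on the two-element set `{0,1}` (modelled on `Bool`). -/
def bmaj (a b c : Bool) : Bool := (a && b) || (a && c) || (b && c)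

/-- The ternary operation `F` on `{0,1} × {0,1}` acting as the majority
operation in the first coordinate and as the triple Boolean meet in the
second coordinate. -/
def F (x y z : Bool × Bool) : Bool × Bool := (bmaj x.1 y.1 z.1, x.2 && y.2 && z.2)

/-- The ternary term operations of the algebra `({0,1} × {0,1}, F)`: the
smallest set of functions containing the three ternary projections and closed
under pointwise composition with `F`. -/
inductive IsFTermOp : (Bool × Bool → Bool × Bool → Bool × Bool → Bool × Bool) → Prop
  | proj1 : IsFTermOp (fun x _ _ => x)
  | proj2 : IsFTermOp (fun _ y _ => y)
  | proj3 : IsFTermOp (fun _ _ z => z)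
  | comp (t₁ t₂ t₃ : Bool × Bool → Bool × Bool → Bool × Bool → Bool × Bool) :
      IsFTermOp t₁ → IsFTermOp t₂ → IsFTermOp t₃ →
      IsFTermOp (fun x y z => F (t₁ x y z) (t₂ x y z) (t₃ x y z))

/-!
A term operation preserves every binary relation that `F` preserves, so it suffices to exhibit
relations preserved by `F` that are incompatible with the two identities. Besides equality of
second coordinates, `F` preserves the relations `flipRel σ`: the meet is `1` only when all its
arguments are, and the majority operation commutes with negation. Put `a = p((0,1),(1,1),(0,0))`.
Comparing with `p((1,1),(1,1),(0,0)) = (1,1)` gives `a.2 = 1`; then `flipRel` relates the first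
coordinate of `a` to those of `p((1,1),(0,1),(1,1))` (negated) and `p((0,1),(1,1),(1,1))` (equal),
which the identity `p(x,y,x) = p(y,x,x)` makes equal.
-/

def flipRel (σ : Bool) (x x' : Bool × Bool) : Prop :=
  x'.2 = true → x.2 = true ∧ x'.1 = (x.1 ^^ σ)

def PreservesRel {α : Type*} (f : α → α → α → α) (R : α → α → Prop) : Prop :=
  ∀ ⦃x x' y y' z z'⦄, R x x' → R y y' → R z z' → R (f x y z) (f x' y' z')

theorem IsFTermOp.preservesRel {R : Bool × Bool → Bool × Bool → Prop} (hF : PreservesRel F R)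
    {t : Bool × Bool → Bool × Bool → Bool × Bool → Bool × Bool} (ht : IsFTermOp t) :
    PreservesRel t R := by
  induction ht with
  | proj1 => exact fun _ _ _ _ _ _ hx _ _ => hx
  | proj2 => exact fun _ _ _ _ _ _ _ hy _ => hy
  | proj3 => exact fun _ _ _ _ _ _ _ _ hz => hz
  | comp _ _ _ _ _ _ ih₁ ih₂ ih₃ =>
    exact fun _ _ _ _ _ _ hx hy hz => hF (ih₁ hx hy hz) (ih₂ hx hy hz) (ih₃ hx hy hz)

theorem bmaj_xor (a b c σ : Bool) : bmaj (a ^^ σ) (b ^^ σ) (c ^^ σ) = (bmaj a b c ^^ σ) := by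
  cases a <;> cases b <;> cases c <;> cases σ <;> rfl

theorem preservesRel_F_snd_eq : PreservesRel F (fun x x' => x.2 = x'.2) := by
  intro _ _ _ _ _ _ hx hy hz
  simp only [F, hx, hy, hz]

theorem preservesRel_F_flipRel (σ : Bool) : PreservesRel F (flipRel σ) := by
  intro x x' y y' z z' hx hy hz h
  simp only [F, Bool.and_eq_true] at h
  obtain ⟨hx₂, hx₁⟩ := hx h.1.1
  obtain ⟨hy₂, hy₁⟩ := hy h.1.2
  obtain ⟨hz₂, hz₁⟩ := hz h.2
  simp only [F, hx₂, hy₂, hz₂, hx₁, hy₁, hz₁, bmaj_xor, Bool.and_self, and_self]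

theorem stmt_14 :
    ¬ ∃ p : Bool × Bool → Bool × Bool → Bool × Bool → Bool × Bool,
      IsFTermOp p ∧ (∀ x y, p x x y = x) ∧ (∀ x y, p x y x = p y x x) := by
  rintro ⟨p, hp, hidem, hswap⟩
  set a := p (false, true) (true, true) (false, false)
  have ha : a.2 = true := by
    have := hp.preservesRel preservesRel_F_snd_eq (x := (false, true)) (x' := (true, true))
      (y := (true, true)) (z := (false, false)) (z' := (false, false)) rfl rfl rfl
    rwa [hidem] at this
  have hneg := hp.preservesRel (preservesRel_F_flipRel true)
    (x := (true, true)) (y := (false, true)) (z := (true, true))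
    (fun _ => ⟨rfl, rfl⟩) (fun _ => ⟨rfl, rfl⟩) (fun h => absurd h Bool.false_ne_true) ha
  have heq := hp.preservesRel (preservesRel_F_flipRel false)
    (x := (false, true)) (y := (true, true)) (z := (true, true))
    (fun _ => ⟨rfl, rfl⟩) (fun _ => ⟨rfl, rfl⟩) (fun h => absurd h Bool.false_ne_true) ha
  rw [hswap] at hneg
  have h := heq.2.symm.trans hneg.2
  simp at h
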